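/- arXiv:1109.6162 — 3 statements merged into one kernel-verified Lean document; each statement's English description precedes it below -/
import Mathlib

section
/- Let J be an n×n unitary matrix over ℂ, let k < n, and let z_1,…,z_n be complex numbers of modulus 1. Suppose that for every i > k and every j (with 1 ≤ j ≤ n) one has Σ_r J_{ir}·conj(J_{jr})·z_r = δ_{ij}. Then z_r = 1 for every index r such that J_{ir} ≠ 0 for some i > k. -/
open scoped ComplexConjugate

/-!
Row `i` of the unitary `J` has `∑ r |J_{ir}|² = 1`, and the hypothesis with `j = i` says
`∑ r |J_{ir}|² z_r = 1`: the point `1` is a convex combination of the points `z_r` of the closed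
unit disc. Since `1` is an extreme point of the disc, every `z_r` carrying positive weight equals `1`.
-/

open scoped ComplexOrder in
theorem Complex.eq_one_of_re_eq_one_of_norm_le_one {z : ℂ} (hre : z.re = 1) (hz : ‖z‖ ≤ 1) :
    z = 1 := by
  have hnonneg : 0 ≤ z := Complex.re_eq_norm.mp (le_antisymm (Complex.re_le_norm z) (hre ▸ hz))
  rw [← Complex.re_add_im z, (Complex.nonneg_iff.mp hnonneg).2.symm, hre]
  simp

theorem Complex.eq_one_of_sum_mul_eq_sum {ι : Type*} {s : Finset ι} {w : ι → ℝ}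
    (hw : ∀ i ∈ s, 0 ≤ w i) {z : ι → ℂ} (hz : ∀ i ∈ s, ‖z i‖ ≤ 1)
    (h : ∑ i ∈ s, (w i : ℂ) * z i = ∑ i ∈ s, (w i : ℂ)) {i : ι} (hi : i ∈ s) (hwi : w i ≠ 0) :
    z i = 1 := by
  have hre_le : ∀ j ∈ s, (z j).re ≤ 1 := fun j hj => (Complex.re_le_norm _).trans (hz j hj)
  have hsum : ∑ j ∈ s, w j * (1 - (z j).re) = 0 := by
    have := congrArg Complex.re h
    simp only [Complex.re_sum, Complex.re_ofReal_mul, Complex.ofReal_re] at this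
    simp only [mul_sub, mul_one, Finset.sum_sub_distrib, this, sub_self]
  have hterm := (Finset.sum_eq_zero_iff_of_nonneg fun j hj =>
    mul_nonneg (hw j hj) (sub_nonneg.mpr (hre_le j hj))).mp hsum i hi
  have hre : (z i).re = 1 := by
    rcases mul_eq_zero.mp hterm with hw0 | hre0
    · exact absurd hw0 hwi
    · linarith
  exact Complex.eq_one_of_re_eq_one_of_norm_le_one hre (hz i hi)

theorem Complex.mul_conj_eq_ofReal_norm_sq (x : ℂ) : x * conj x = ((‖x‖ ^ 2 : ℝ) : ℂ) := by
  rw [Complex.mul_conj, Complex.normSq_eq_norm_sq]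

theorem Matrix.sum_norm_sq_row_eq_one_of_mem_unitaryGroup {n : Type*} [Fintype n] [DecidableEq n]
    {J : Matrix n n ℂ} (hJ : J ∈ Matrix.unitaryGroup n ℂ) (i : n) :
    ∑ r, ((‖J i r‖ ^ 2 : ℝ) : ℂ) = 1 := by
  have := congrFun (congrFun (Matrix.mem_unitaryGroup_iff.mp hJ) i) i
  simpa [Matrix.mul_apply, Complex.mul_conj_eq_ofReal_norm_sq] using this

theorem stmt_4_general (n k : ℕ) (J : Matrix (Fin n) (Fin n) ℂ)
    (hJ : J ∈ Matrix.unitaryGroup (Fin n) ℂ)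
    (z : Fin n → ℂ) (hz : ∀ r, ‖z r‖ = 1)
    (h : ∀ i j : Fin n, k ≤ (i : ℕ) →
      ∑ r, J i r * conj (J j r) * z r = if i = j then 1 else 0) :
    ∀ r : Fin n, (∃ i : Fin n, k ≤ (i : ℕ) ∧ J i r ≠ 0) → z r = 1 := by
  rintro r ⟨i, hik, hJir⟩
  have hdiag : ∑ s, ((‖J i s‖ ^ 2 : ℝ) : ℂ) * z s = ∑ s, ((‖J i s‖ ^ 2 : ℝ) : ℂ) := by
    rw [Matrix.sum_norm_sq_row_eq_one_of_mem_unitaryGroup hJ i]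
    simpa [Complex.mul_conj_eq_ofReal_norm_sq] using h i i hik
  exact Complex.eq_one_of_sum_mul_eq_sum (fun s _ => sq_nonneg _) (fun s _ => (hz s).le) hdiag
    (Finset.mem_univ r) (pow_ne_zero 2 (norm_ne_zero_iff.mpr hJir))

/-- If `J` is unitary, the `z_r` are unimodular, and
`Σ_r J_{ir} conj(J_{jr}) z_r = δ_{ij}` for all `i > k`, then `z_r = 1` whenever
some entry `J_{ir}` with `i > k` is nonzero. -/
theorem stmt_4 (n k : ℕ) (hk : k < n) (J : Matrix (Fin n) (Fin n) ℂ)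
    (hJ : J ∈ Matrix.unitaryGroup (Fin n) ℂ)
    (z : Fin n → ℂ) (hz : ∀ r, ‖z r‖ = 1)
    (h : ∀ i j : Fin n, k ≤ (i : ℕ) →
      ∑ r, J i r * conj (J j r) * z r = if i = j then 1 else 0) :
    ∀ r : Fin n, (∃ i : Fin n, k ≤ (i : ℕ) ∧ J i r ≠ 0) → z r = 1 :=
  stmt_4_general n k J hJ z hz h
end

section
/- A real n×n orthogonal matrix all of whose entries are nonnegative is a permutation matrix: there exists a permutation σ of {1,…,n} with u_{ij} = δ_{i,σ(j)}. -/
open Matrix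

/-- A real orthogonal matrix with nonnegative entries is a permutation matrix. -/
theorem stmt_9 (n : ℕ) (u : Matrix (Fin n) (Fin n) ℝ)
    (h1 : u * uᵀ = 1) (h2 : uᵀ * u = 1)
    (hpos : ∀ i j, 0 ≤ u i j) :
    ∃ σ : Equiv.Perm (Fin n), ∀ i j, u i j = if i = σ j then 1 else 0 := by
  -- column orthogonality relations
  have hcol : ∀ j j' : Fin n, ∑ i, u i j * u i j' = if j = j' then (1:ℝ) else 0 := by
    intro j j'
    have := congrFun (congrFun h2 j) j'
    simpa [Matrix.mul_apply, Matrix.transpose_apply, Matrix.one_apply] using this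
  -- row orthogonality relations
  have hrow : ∀ i i' : Fin n, ∑ k, u i k * u i' k = if i = i' then (1:ℝ) else 0 := by
    intro i i'
    have := congrFun (congrFun h1 i) i'
    simpa [Matrix.mul_apply, Matrix.transpose_apply, Matrix.one_apply] using this
  have hrowo : ∀ i i' : Fin n, i ≠ i' → ∀ k, u i k * u i' k = 0 := by
    intro i i' hne k
    have hsum : ∑ k, u i k * u i' k = 0 := by simpa [hne] using hrow i i'
    have := (Finset.sum_eq_zero_iff_of_nonneg
      (fun k _ => mul_nonneg (hpos i k) (hpos i' k))).mp hsum
    exact this k (Finset.mem_univ k)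
  have hcolo : ∀ j j' : Fin n, j ≠ j' → ∀ i, u i j * u i j' = 0 := by
    intro j j' hne i
    have hsum : ∑ i, u i j * u i j' = 0 := by simpa [hne] using hcol j j'
    have := (Finset.sum_eq_zero_iff_of_nonneg
      (fun i _ => mul_nonneg (hpos i j) (hpos i j'))).mp hsum
    exact this i (Finset.mem_univ i)
  have key : ∀ j, ∃ i, u i j = 1 ∧ ∀ i', i' ≠ i → u i' j = 0 := by
    intro j
    have hsum : ∑ i, u i j * u i j = 1 := by simpa using hcol j j
    -- some entry is positive
    have hex : ∃ i, 0 < u i j := by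
      by_contra h
      push_neg at h
      have hz : ∀ i, u i j = 0 := fun i => le_antisymm (h i) (hpos i j)
      rw [Finset.sum_eq_zero (fun i _ => by rw [hz i]; ring)] at hsum
      norm_num at hsum
    obtain ⟨i, hi⟩ := hex
    have hzero : ∀ i', i' ≠ i → u i' j = 0 := by
      intro i' hne
      have := hrowo i' i hne j
      rcases mul_eq_zero.mp this with h | h
      · exact h
      · exact absurd h (ne_of_gt hi)
    refine ⟨i, ?_, hzero⟩
    have : ∑ i', u i' j * u i' j = u i j * u i j := by
      apply Finset.sum_eq_single
      · intro b _ hb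
        rw [hzero b hb]; ring
      · intro h; exact absurd (Finset.mem_univ i) h
    rw [this] at hsum
    nlinarith [hpos i j]
  choose f hf1 hf2 using key
  have hinj : Function.Injective f := by
    intro j j' hjj
    by_contra hne
    have := hcolo j j' hne (f j)
    rw [hf1 j, hjj, hf1 j'] at this
    norm_num at this
  let σ : Equiv.Perm (Fin n) := Equiv.ofBijective f (Finite.injective_iff_bijective.mp hinj)
  refine ⟨σ, fun i j => ?_⟩
  have hσ : σ j = f j := rfl
  by_cases h : i = σ j
  · rw [if_pos h, h, hσ, hf1 j]
  · rw [if_neg h]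
    exact hf2 j i (by rw [hσ] at h; exact h)
end

section
/- In the free product ℤ/2 * ℤ/2 (the infinite dihedral group), let a and b denote the two canonical order-2 generators, and in the group algebra ℂ[ℤ/2 * ℤ/2] set p = (1+a)/2, q = (1+b)/2 (the projections corresponding to the generators). Then the element x = q·p·q + (1−q)·p·(1−q) does not commute with p. -/
open Monoid

noncomputable section

private def Amat : Matrix (Fin 2) (Fin 2) ℂ := !![1, 0; 0, -1]
private def Bmat : Matrix (Fin 2) (Fin 2) ℂ := !![3/5, 4/5; 4/5, -3/5]

private lemma Amat_sq : Amat * Amat = 1 := by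
  simp [Amat, Matrix.mul_fin_two, Matrix.one_fin_two]

private lemma Bmat_sq : Bmat * Bmat = 1 := by
  simp [Bmat, Matrix.mul_fin_two, Matrix.one_fin_two]
  norm_num

/-- monoid hom from `Multiplicative (ZMod 2)` sending the generator to an involution. -/
private def z2hom (M : Matrix (Fin 2) (Fin 2) ℂ) (h : M * M = 1) :
    Multiplicative (ZMod 2) →* Matrix (Fin 2) (Fin 2) ℂ where
  toFun x := if Multiplicative.toAdd x = 0 then 1 else M
  map_one' := by simp
  map_mul' x y := by
    have hz : ∀ z : ZMod 2, z = 0 ∨ z = 1 := by decide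
    rcases hz (Multiplicative.toAdd x) with hx | hx <;>
      rcases hz (Multiplicative.toAdd y) with hy | hy <;>
        simp [toAdd_mul, hx, hy, h, (by decide : (1 + 1 : ZMod 2) = 0)]

private def φ : MonoidAlgebra ℂ (Coprod (Multiplicative (ZMod 2)) (Multiplicative (ZMod 2)))
    →ₐ[ℂ] Matrix (Fin 2) (Fin 2) ℂ :=
  MonoidAlgebra.lift ℂ _ _ (Coprod.lift (z2hom Amat Amat_sq) (z2hom Bmat Bmat_sq))

/-- In the group algebra of the infinite dihedral group `ℤ/2 ∗ ℤ/2`, with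
`p = (1+a)/2` and `q = (1+b)/2` the projections coming from the two canonical
order-2 generators `a, b`, the element `x = q p q + (1-q) p (1-q)` does not
commute with `p`. -/
theorem stmt_16
    (a b : MonoidAlgebra ℂ (Coprod (Multiplicative (ZMod 2)) (Multiplicative (ZMod 2))))
    (ha : a = MonoidAlgebra.of ℂ _ (Coprod.inl (Multiplicative.ofAdd (1 : ZMod 2))))
    (hb : b = MonoidAlgebra.of ℂ _ (Coprod.inr (Multiplicative.ofAdd (1 : ZMod 2))))
    (p q x : MonoidAlgebra ℂ (Coprod (Multiplicative (ZMod 2)) (Multiplicative (ZMod 2))))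
    (hp : p = (2 : ℂ)⁻¹ • (1 + a)) (hq : q = (2 : ℂ)⁻¹ • (1 + b))
    (hx : x = q * p * q + (1 - q) * p * (1 - q)) :
    x * p ≠ p * x := by
  intro h
  have hφa : φ a = Amat := by
    rw [ha, φ]
    rw [MonoidAlgebra.lift_of, Coprod.lift_apply_inl]
    simp [z2hom]
  have hφb : φ b = Bmat := by
    rw [hb, φ]
    rw [MonoidAlgebra.lift_of, Coprod.lift_apply_inr]
    simp [z2hom]
  have hφp : φ p = (2 : ℂ)⁻¹ • (1 + Amat) := by
    rw [hp]; simp [hφa]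
  have hφq : φ q = (2 : ℂ)⁻¹ • (1 + Bmat) := by
    rw [hq]; simp [hφb]
  have h2 : φ (x * p) = φ (p * x) := by rw [h]
  rw [map_mul, map_mul, hφp, hx] at h2
  simp only [map_add, map_mul, map_sub, map_one, hφp, hφq] at h2
  have h3 := congrFun (congrFun h2 0) 1
  simp [Amat, Bmat, Matrix.mul_fin_two, Matrix.one_fin_two, Matrix.smul_of,
    Matrix.mul_apply, Fin.sum_univ_two, Matrix.smul_apply] at h3
  norm_num at h3

end
end
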